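/- Let B ∈ ℝ^{m×n} be a nonnegative matrix with no zero rows or columns, and let R ∈ ℝ^{m×m}, C ∈ ℝ^{n×n} be the unique diagonal matrices with B𝟙 = R𝟙 and 𝟙ᵀB = 𝟙ᵀC. Then for all S ⊆ [m], T ⊆ [n]: |⟨χ_S,Bχ_T⟩ − ⟨χ_S,B𝟙⟩⟨𝟙,Bχ_T⟩/⟨𝟙,B𝟙⟩| ≤ σ₂(R^{-1/2}BC^{-1/2}) · sqrt( (⟨χ_S,B𝟙⟩ − ⟨χ_S,B𝟙⟩²/⟨𝟙,B𝟙⟩) · (⟨𝟙,Bχ_T⟩ − ⟨𝟙,Bχ_T⟩²/⟨𝟙,B𝟙⟩) ). -/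

import Mathlib

/-
The normalized matrix `M = R^{-1/2} B C^{-1/2}` is a contraction, by Cauchy–Schwarz applied row by
row with weights `B i j`, so every eigenvalue of `MᵀM` is at most `1`; and `MᵀM` fixes
`C^{1/2} 𝟙`, so `1` is its top eigenvalue. Centering `χ_S` and `χ_T` by their weighted means and
rescaling by `R^{1/2}`, `C^{1/2}` gives vectors `p`, `q` with `⟨p, M q⟩` the discrepancy
`e(S,T) - vol S vol T / vol`, squared norms the two variance factors, and `q ⊥ C^{1/2} 𝟙`.
On that orthogonal complement `|M q|² ≤ σ₂² |q|²`, and Cauchy–Schwarz finishes.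
-/

open Matrix Finset

theorem sq_dotProduct_le {ι : Type*} [Fintype ι] (x y : ι → ℝ) :
    (x ⬝ᵥ y) ^ 2 ≤ (x ⬝ᵥ x) * (y ⬝ᵥ y) := by
  simpa only [dotProduct, sq] using sum_mul_sq_le_sq_mul_sq univ x y

section Centering

variable {ι κ : Type*} [Fintype ι] [Fintype κ]

theorem sub_smul_one_dotProduct_mulVec_sub_smul_one {K : Type*} [Field K] (B : Matrix ι κ K)
    (x : ι → K) (y : κ → K) (hτ : 1 ⬝ᵥ (B *ᵥ 1) ≠ 0) :
    (x - (x ⬝ᵥ (B *ᵥ 1) / 1 ⬝ᵥ (B *ᵥ 1)) • 1) ⬝ᵥ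
        (B *ᵥ (y - (1 ⬝ᵥ (B *ᵥ y) / 1 ⬝ᵥ (B *ᵥ 1)) • 1)) =
      x ⬝ᵥ (B *ᵥ y) - x ⬝ᵥ (B *ᵥ 1) * 1 ⬝ᵥ (B *ᵥ y) / 1 ⬝ᵥ (B *ᵥ 1) := by
  simp only [sub_dotProduct, dotProduct_sub, mulVec_sub, mulVec_smul, smul_dotProduct,
    dotProduct_smul, smul_eq_mul]
  field_simp
  ring

variable {w : ι → ℝ}

theorem sqrt_mul_sub_smul_one_dotProduct_self (hw : ∀ i, 0 ≤ w i) (x : ι → ℝ) {a : ℝ}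
    (ha : a * ∑ i, w i = ∑ i, w i * x i) :
    (fun i => √(w i) * (x - a • 1) i) ⬝ᵥ (fun i => √(w i) * (x - a • 1) i) =
      ∑ i, w i * (x i * x i) - (∑ i, w i * x i) ^ 2 / ∑ i, w i := by
  have expand : ∀ i, √(w i) * (x - a • 1) i * (√(w i) * (x - a • 1) i) =
      w i * (x i * x i) - 2 * a * (w i * x i) + a ^ 2 * w i := fun i => by
    rw [mul_mul_mul_comm, Real.mul_self_sqrt (hw i)]
    simp only [Pi.sub_apply, Pi.smul_apply, Pi.one_apply, smul_eq_mul]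
    ring
  simp only [dotProduct, expand, sum_add_distrib, sum_sub_distrib, ← mul_sum, ← ha]
  field_simp
  ring

theorem sqrt_mul_sub_smul_one_dotProduct_sqrt (hw : ∀ i, 0 ≤ w i) (x : ι → ℝ) {a : ℝ}
    (ha : a * ∑ i, w i = ∑ i, w i * x i) :
    (fun i => √(w i) * (x - a • 1) i) ⬝ᵥ (fun i => √(w i)) = 0 := by
  have expand : ∀ i, √(w i) * (x - a • 1) i * √(w i) = w i * x i - a * w i := fun i => by
    rw [mul_right_comm, Real.mul_self_sqrt (hw i)]
    simp only [Pi.sub_apply, Pi.smul_apply, Pi.one_apply, smul_eq_mul]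
    ring
  simp only [dotProduct, expand, sum_sub_distrib, ← mul_sum, ha, sub_self]

end Centering

section SortedSpectrum

variable {n : ℕ} (hn : 1 < n) {s c d : Fin n → ℝ} {μ : ℝ}

theorem apply_zero_eq_zero_of_sum_mul_eq_zero (hs : Antitone s) (hs1 : s ⟨1, hn⟩ < μ)
    (hd : ∀ k, s k * d k = μ * d k) (hd0 : d ≠ 0) (hcd : ∑ k, c k * d k = 0) :
    c ⟨0, by omega⟩ = 0 := by
  have hd_eq : ∀ k, k ≠ ⟨0, by omega⟩ → d k = 0 := fun k hk => by
    have hk1 : (⟨1, hn⟩ : Fin n) ≤ k := Fin.mk_le_of_le_val (by grind)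
    have hsk : s k ≠ μ := ((hs hk1).trans_lt hs1).ne
    exact (mul_eq_mul_right_iff.mp (hd k)).resolve_left hsk
  have hd0' : d ⟨0, by omega⟩ ≠ 0 := fun h => hd0 (funext fun k => by
    by_cases hk : k = ⟨0, by omega⟩
    · rw [hk, h, Pi.zero_apply]
    · exact hd_eq k hk)
  rw [sum_eq_single _ (fun k _ hk => by rw [hd_eq k hk, mul_zero]) (by simp)] at hcd
  exact (mul_eq_zero.mp hcd).resolve_right hd0'

/-- The bound `⟪q, A q⟫ ≤ λ₂ ‖q‖²` for `q` orthogonal to a top eigenvector, in the coordinates of an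
eigenbasis sorted by decreasing eigenvalue `s`: `d` are the coordinates of the top eigenvector and
`c` those of `q`. -/
theorem sum_mul_mul_self_le_of_sum_mul_eq_zero (hs : Antitone s) (hs0 : s ⟨0, by omega⟩ ≤ μ)
    (hd : ∀ k, s k * d k = μ * d k) (hd0 : d ≠ 0) (hcd : ∑ k, c k * d k = 0) :
    ∑ k, s k * (c k * c k) ≤ s ⟨1, hn⟩ * ∑ k, c k * c k := by
  rw [mul_sum]
  refine sum_le_sum fun k _ => ?_
  by_cases hk : k = ⟨0, by omega⟩
  · subst hk
    rcases le_or_gt μ (s ⟨1, hn⟩) with hμ | hμ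
    · exact mul_le_mul_of_nonneg_right (hs0.trans hμ) (mul_self_nonneg _)
    · rw [apply_zero_eq_zero_of_sum_mul_eq_zero hn hs hμ hd hd0 hcd]
      simp
  · exact mul_le_mul_of_nonneg_right (hs (Fin.mk_le_of_le_val (by grind))) (mul_self_nonneg _)

end SortedSpectrum

namespace Matrix.IsHermitian

variable {ι : Type*} [Fintype ι] [DecidableEq ι] {A : Matrix ι ι ℝ} (hA : A.IsHermitian)

theorem dotProduct_eq_sum_eigenvectorBasis (x y : ι → ℝ) :
    x ⬝ᵥ y = ∑ i, (⇑(hA.eigenvectorBasis i) ⬝ᵥ x) * (⇑(hA.eigenvectorBasis i) ⬝ᵥ y) := by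
  have := hA.eigenvectorBasis.sum_inner_mul_inner (WithLp.toLp 2 x) (WithLp.toLp 2 y)
  simp only [EuclideanSpace.inner_eq_star_dotProduct] at this
  simpa [dotProduct_comm] using this.symm

theorem eigenvectorBasis_dotProduct_mulVec (i : ι) (x : ι → ℝ) :
    ⇑(hA.eigenvectorBasis i) ⬝ᵥ (A *ᵥ x) = hA.eigenvalues i * (⇑(hA.eigenvectorBasis i) ⬝ᵥ x) := by
  rw [dotProduct_mulVec, ← mulVec_transpose, (isHermitian_iff_isSymm.mp hA).eq,
    mulVec_eigenvectorBasis, smul_dotProduct, smul_eq_mul]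

theorem dotProduct_mulVec_eq_sum_eigenvalues (x y : ι → ℝ) :
    x ⬝ᵥ (A *ᵥ y) = ∑ i, hA.eigenvalues i *
      ((⇑(hA.eigenvectorBasis i) ⬝ᵥ x) * (⇑(hA.eigenvectorBasis i) ⬝ᵥ y)) := by
  rw [hA.dotProduct_eq_sum_eigenvectorBasis]
  simp only [eigenvectorBasis_dotProduct_mulVec]
  exact sum_congr rfl fun i _ => by ring

theorem eigenvalues_le {μ : ℝ} (h : ∀ x, x ⬝ᵥ (A *ᵥ x) ≤ μ * (x ⬝ᵥ x)) (i : ι) :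
    hA.eigenvalues i ≤ μ := by
  set b := ⇑(hA.eigenvectorBasis i)
  have hb : b ⬝ᵥ b = 1 := by
    have := hA.eigenvectorBasis.inner_eq_one i
    rwa [EuclideanSpace.inner_eq_star_dotProduct, star_trivial, dotProduct_comm] at this
  simpa [b, mulVec_eigenvectorBasis, hb] using h b

end Matrix.IsHermitian

theorem Matrix.IsHermitian.dotProduct_mulVec_le_of_orthogonal {n : ℕ} (hn : 1 < n)
    {A : Matrix (Fin n) (Fin n) ℝ} (hA : A.IsHermitian) {s : Fin n → ℝ} (hs : Antitone s)
    (e : Fin n ≃ Fin n) (hse : ∀ k, s k = hA.eigenvalues (e k)) {μ : ℝ} (hμ : ∀ i, hA.eigenvalues i ≤ μ)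
    {v : Fin n → ℝ} (hv : A *ᵥ v = μ • v) (hv0 : v ≠ 0) {q : Fin n → ℝ} (hqv : q ⬝ᵥ v = 0) :
    q ⬝ᵥ (A *ᵥ q) ≤ s ⟨1, hn⟩ * (q ⬝ᵥ q) := by
  set b := fun k => ⇑(hA.eigenvectorBasis (e k))
  have parseval : ∀ x y, x ⬝ᵥ y = ∑ k, (b k ⬝ᵥ x) * (b k ⬝ᵥ y) := fun x y => by
    rw [hA.dotProduct_eq_sum_eigenvectorBasis, ← e.sum_comp]
  have hqAq : q ⬝ᵥ (A *ᵥ q) = ∑ k, s k * ((b k ⬝ᵥ q) * (b k ⬝ᵥ q)) := by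
    rw [hA.dotProduct_mulVec_eq_sum_eigenvalues, ← e.sum_comp]
    simp only [hse, b]
  have hd : ∀ k, s k * (b k ⬝ᵥ v) = μ * (b k ⬝ᵥ v) := fun k => by
    rw [hse, ← hA.eigenvectorBasis_dotProduct_mulVec, hv, dotProduct_smul, smul_eq_mul]
  have hd0 : (fun k => b k ⬝ᵥ v) ≠ 0 := fun h => hv0 <| by
    rw [← dotProduct_self_eq_zero, parseval]
    simp [funext_iff.mp h]
  rw [hqAq, parseval q q]
  exact sum_mul_mul_self_le_of_sum_mul_eq_zero hn hs (hse _ ▸ hμ _) hd hd0 (parseval q v ▸ hqv)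

theorem abs_dotProduct_mulVec_le_of_orthogonal {ι : Type*} [Fintype ι] {n : ℕ} (hn : 1 < n)
    {M : Matrix ι (Fin n) ℝ} (hMM : (Mᵀ * M).IsHermitian) {s : Fin n → ℝ} (hs : Antitone s)
    (e : Fin n ≃ Fin n) (hse : ∀ k, s k = hMM.eigenvalues (e k)) {μ : ℝ}
    (hμ : ∀ i, hMM.eigenvalues i ≤ μ) {v : Fin n → ℝ} (hv : (Mᵀ * M) *ᵥ v = μ • v) (hv0 : v ≠ 0)
    (p : ι → ℝ) {q : Fin n → ℝ} (hqv : q ⬝ᵥ v = 0) :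
    |p ⬝ᵥ (M *ᵥ q)| ≤ √(s ⟨1, hn⟩) * √((p ⬝ᵥ p) * (q ⬝ᵥ q)) := by
  have hMq : (M *ᵥ q) ⬝ᵥ (M *ᵥ q) ≤ s ⟨1, hn⟩ * (q ⬝ᵥ q) := by
    rw [show (M *ᵥ q) ⬝ᵥ (M *ᵥ q) = q ⬝ᵥ ((Mᵀ * M) *ᵥ q) by
      rw [← mulVec_mulVec, dotProduct_mulVec q, vecMul_transpose]]
    exact hMM.dotProduct_mulVec_le_of_orthogonal hn hs e hse hμ hv hv0 hqv
  have hpp : 0 ≤ p ⬝ᵥ p := sum_nonneg fun i _ => mul_self_nonneg _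
  have hqq : 0 ≤ q ⬝ᵥ q := sum_nonneg fun i _ => mul_self_nonneg _
  rw [← Real.sqrt_mul' _ (mul_nonneg hpp hqq)]
  refine Real.abs_le_sqrt ?_
  calc (p ⬝ᵥ (M *ᵥ q)) ^ 2 ≤ (p ⬝ᵥ p) * ((M *ᵥ q) ⬝ᵥ (M *ᵥ q)) := sq_dotProduct_le _ _
    _ ≤ (p ⬝ᵥ p) * (s ⟨1, hn⟩ * (q ⬝ᵥ q)) := by gcongr
    _ = s ⟨1, hn⟩ * ((p ⬝ᵥ p) * (q ⬝ᵥ q)) := by ring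

namespace Matrix

variable {ι κ : Type*} [Fintype ι] [Fintype κ]

/-- `R^{-1/2} B C^{-1/2}`, with `R` and `C` the diagonal matrices of row and column sums of `B`. -/
noncomputable def degreeNormalized (B : Matrix ι κ ℝ) : Matrix ι κ ℝ :=
  of fun i j => (√(∑ j, B i j))⁻¹ * B i j * (√(∑ i, B i j))⁻¹

variable {B : Matrix ι κ ℝ}

theorem degreeNormalized_transpose (B : Matrix ι κ ℝ) :
    (degreeNormalized B)ᵀ = degreeNormalized Bᵀ := by
  ext j i
  simp only [degreeNormalized, transpose_apply, of_apply]
  ring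

theorem degreeNormalized_mulVec_sqrt_mul (hc : ∀ j, 0 < ∑ i, B i j) (y : κ → ℝ) :
    degreeNormalized B *ᵥ (fun j => √(∑ i, B i j) * y j) =
      fun i => (√(∑ j, B i j))⁻¹ * (B *ᵥ y) i := by
  ext i
  simp only [mulVec, dotProduct, degreeNormalized, of_apply, mul_sum]
  refine sum_congr rfl fun j _ => ?_
  have := (Real.sqrt_pos.mpr (hc j)).ne'
  field_simp

theorem degreeNormalized_mulVec_sqrt (hc : ∀ j, 0 < ∑ i, B i j) :
    degreeNormalized B *ᵥ (fun j => √(∑ i, B i j)) = fun i => √(∑ j, B i j) := by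
  simpa [mulVec, dotProduct, ← div_eq_inv_mul, Real.div_sqrt] using
    degreeNormalized_mulVec_sqrt_mul hc 1

theorem transpose_degreeNormalized_mul_self_mulVec_sqrt (hr : ∀ i, 0 < ∑ j, B i j)
    (hc : ∀ j, 0 < ∑ i, B i j) :
    ((degreeNormalized B)ᵀ * degreeNormalized B) *ᵥ (fun j => √(∑ i, B i j)) =
      fun j => √(∑ i, B i j) := by
  rw [← mulVec_mulVec, degreeNormalized_mulVec_sqrt hc, degreeNormalized_transpose]
  exact degreeNormalized_mulVec_sqrt (B := Bᵀ) hr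

theorem sqrt_mul_dotProduct_degreeNormalized_mulVec (hr : ∀ i, 0 < ∑ j, B i j)
    (hc : ∀ j, 0 < ∑ i, B i j) (x : ι → ℝ) (y : κ → ℝ) :
    (fun i => √(∑ j, B i j) * x i) ⬝ᵥ (degreeNormalized B *ᵥ fun j => √(∑ i, B i j) * y j) =
      x ⬝ᵥ (B *ᵥ y) := by
  rw [degreeNormalized_mulVec_sqrt_mul hc]
  refine sum_congr rfl fun i _ => ?_
  have := (Real.sqrt_pos.mpr (hr i)).ne'
  field_simp

theorem degreeNormalized_mulVec_dotProduct_self_le (hB : ∀ i j, 0 ≤ B i j) (w : κ → ℝ) :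
    (degreeNormalized B *ᵥ w) ⬝ᵥ (degreeNormalized B *ᵥ w) ≤ w ⬝ᵥ w := by
  set z := fun j => (√(∑ i, B i j))⁻¹ * w j
  have row_le : ∀ i, (degreeNormalized B *ᵥ w) i * (degreeNormalized B *ᵥ w) i ≤
      ∑ j, B i j * z j ^ 2 := fun i => by
    have hMw : (degreeNormalized B *ᵥ w) i = (√(∑ j, B i j))⁻¹ * ∑ j, B i j * z j := by
      simp only [mulVec, dotProduct, degreeNormalized, of_apply, mul_sum, z]
      exact sum_congr rfl fun j _ => by ring
    have cauchySchwarz : (∑ j, B i j * z j) ^ 2 ≤ (∑ j, B i j) * ∑ j, B i j * z j ^ 2 :=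
      sum_sq_le_sum_mul_sum_of_sq_le_mul _ (fun j _ => hB i j)
        (fun j _ => mul_nonneg (hB i j) (sq_nonneg _)) (fun j _ => le_of_eq (by ring))
    have hr : 0 ≤ ∑ j, B i j := sum_nonneg fun j _ => hB i j
    calc (degreeNormalized B *ᵥ w) i * (degreeNormalized B *ᵥ w) i
        = (√(∑ j, B i j))⁻¹ ^ 2 * (∑ j, B i j * z j) ^ 2 := by rw [hMw]; ring
      _ = (∑ j, B i j)⁻¹ * (∑ j, B i j * z j) ^ 2 := by rw [inv_pow, Real.sq_sqrt hr]
      _ ≤ (∑ j, B i j)⁻¹ * ((∑ j, B i j) * ∑ j, B i j * z j ^ 2) := by gcongr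
      _ = ((∑ j, B i j)⁻¹ * ∑ j, B i j) * ∑ j, B i j * z j ^ 2 := by ring
      _ ≤ ∑ j, B i j * z j ^ 2 :=
          mul_le_of_le_one_left (sum_nonneg fun j _ => mul_nonneg (hB i j) (sq_nonneg _))
            inv_mul_le_one
  calc (degreeNormalized B *ᵥ w) ⬝ᵥ (degreeNormalized B *ᵥ w)
      ≤ ∑ i, ∑ j, B i j * z j ^ 2 := sum_le_sum fun i _ => row_le i
    _ = ∑ j, ((∑ i, B i j) * (∑ i, B i j)⁻¹) * (w j * w j) := by
        rw [sum_comm]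
        refine sum_congr rfl fun j _ => ?_
        rw [← sum_mul]
        have hc : 0 ≤ ∑ i, B i j := sum_nonneg fun i _ => hB i j
        simp only [z, mul_pow, inv_pow, Real.sq_sqrt hc]
        ring
    _ ≤ w ⬝ᵥ w := sum_le_sum fun j _ => mul_le_of_le_one_left (mul_self_nonneg _) mul_inv_le_one

theorem eigenvalues_transpose_degreeNormalized_mul_self_le_one {ι κ : Type*} [Fintype ι]
    [Fintype κ] [DecidableEq κ] {B : Matrix ι κ ℝ} (hB : ∀ i j, 0 ≤ B i j)
    (hMM : ((degreeNormalized B)ᵀ * degreeNormalized B).IsHermitian) (k : κ) :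
    hMM.eigenvalues k ≤ 1 :=
  hMM.eigenvalues_le (fun w => by
    rw [← mulVec_mulVec, dotProduct_mulVec w, vecMul_transpose, one_mul]
    exact degreeNormalized_mulVec_dotProduct_self_le hB w) k

theorem dotProduct_mulVec_one (B : Matrix ι κ ℝ) (x : ι → ℝ) :
    x ⬝ᵥ (B *ᵥ 1) = ∑ i, (∑ j, B i j) * x i := by
  simp [dotProduct, mulVec, mul_comm]

theorem one_dotProduct_mulVec (B : Matrix ι κ ℝ) (y : κ → ℝ) :
    1 ⬝ᵥ (B *ᵥ y) = ∑ j, (∑ i, B i j) * y j := by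
  simp [dotProduct, mulVec, sum_mul, sum_comm (γ := κ)]

end Matrix

open Matrix in
theorem abs_dotProduct_mulVec_sub_le {ι : Type*} [Fintype ι] {n : ℕ} (hn : 1 < n)
    {B : Matrix ι (Fin n) ℝ} (hB : ∀ i j, 0 ≤ B i j) (hr : ∀ i, 0 < ∑ j, B i j)
    (hc : ∀ j, 0 < ∑ i, B i j)
    (hMM : ((degreeNormalized B)ᵀ * degreeNormalized B).IsHermitian) {s : Fin n → ℝ}
    (hs : Antitone s) (e : Fin n ≃ Fin n) (hse : ∀ k, s k = hMM.eigenvalues (e k))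
    (x : ι → ℝ) (y : Fin n → ℝ) :
    |x ⬝ᵥ (B *ᵥ y) - (x ⬝ᵥ (B *ᵥ 1)) * (1 ⬝ᵥ (B *ᵥ y)) / (1 ⬝ᵥ (B *ᵥ 1))| ≤
      √(s ⟨1, hn⟩) * √(((x * x) ⬝ᵥ (B *ᵥ 1) - (x ⬝ᵥ (B *ᵥ 1)) ^ 2 / (1 ⬝ᵥ (B *ᵥ 1))) *
        (1 ⬝ᵥ (B *ᵥ (y * y)) - (1 ⬝ᵥ (B *ᵥ y)) ^ 2 / (1 ⬝ᵥ (B *ᵥ 1)))) := by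
  have hτr : 1 ⬝ᵥ (B *ᵥ 1) = ∑ i, ∑ j, B i j := by simpa using dotProduct_mulVec_one B 1
  have hτc : 1 ⬝ᵥ (B *ᵥ 1) = ∑ j, ∑ i, B i j := by simpa using one_dotProduct_mulVec B 1
  have hτ : (1 ⬝ᵥ (B *ᵥ 1) : ℝ) ≠ 0 :=
    hτc ▸ (sum_pos (fun j _ => hc j) ⟨⟨0, by omega⟩, mem_univ _⟩).ne'
  set α := x ⬝ᵥ (B *ᵥ 1) / 1 ⬝ᵥ (B *ᵥ 1) with hα
  set β := 1 ⬝ᵥ (B *ᵥ y) / 1 ⬝ᵥ (B *ᵥ 1) with hβ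
  have hαr : α * ∑ i, ∑ j, B i j = ∑ i, (∑ j, B i j) * x i := by
    rw [hα, ← hτr, ← dotProduct_mulVec_one, div_mul_cancel₀ _ hτ]
  have hβc : β * ∑ j, ∑ i, B i j = ∑ j, (∑ i, B i j) * y j := by
    rw [hβ, ← hτc, ← one_dotProduct_mulVec, div_mul_cancel₀ _ hτ]
  have hr₀ := fun i => (hr i).le
  have hc₀ := fun j => (hc j).le
  set p := fun i => √(∑ j, B i j) * (x - α • 1) i
  set q := fun j => √(∑ i, B i j) * (y - β • 1) j
  have hpMq : x ⬝ᵥ (B *ᵥ y) - (x ⬝ᵥ (B *ᵥ 1)) * (1 ⬝ᵥ (B *ᵥ y)) / (1 ⬝ᵥ (B *ᵥ 1)) =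
      p ⬝ᵥ (degreeNormalized B *ᵥ q) := by
    rw [sqrt_mul_dotProduct_degreeNormalized_mulVec hr hc,
      sub_smul_one_dotProduct_mulVec_sub_smul_one B x y hτ]
  have hpp : (x * x) ⬝ᵥ (B *ᵥ 1) - (x ⬝ᵥ (B *ᵥ 1)) ^ 2 / (1 ⬝ᵥ (B *ᵥ 1)) = p ⬝ᵥ p := by
    rw [sqrt_mul_sub_smul_one_dotProduct_self hr₀ x hαr, hτr, dotProduct_mulVec_one,
      dotProduct_mulVec_one]
    rfl
  have hqq : 1 ⬝ᵥ (B *ᵥ (y * y)) - (1 ⬝ᵥ (B *ᵥ y)) ^ 2 / (1 ⬝ᵥ (B *ᵥ 1)) = q ⬝ᵥ q := by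
    rw [sqrt_mul_sub_smul_one_dotProduct_self hc₀ y hβc, hτc, one_dotProduct_mulVec,
      one_dotProduct_mulVec]
    rfl
  have hv0 : (fun j => √(∑ i, B i j)) ≠ 0 :=
    fun h => (Real.sqrt_pos.mpr (hc ⟨0, by omega⟩)).ne' (congrFun h _)
  rw [hpMq, hpp, hqq]
  exact abs_dotProduct_mulVec_le_of_orthogonal hn hMM hs e hse
    (eigenvalues_transpose_degreeNormalized_mul_self_le_one hB hMM)
    ((transpose_degreeNormalized_mul_self_mulVec_sqrt hr hc).trans (one_smul ℝ _).symm) hv0 p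
    (sqrt_mul_sub_smul_one_dotProduct_sqrt hc₀ y hβc)

/-- **Strengthened Butler Expander Mixing Lemma** (Corollary of Theorem 8 of the paper),
with `R`/`C` the diagonal matrices of row/column sums of `B`. -/
theorem butler_expander_mixing {m n : ℕ} (hn : 2 ≤ n)
    (B : Matrix (Fin m) (Fin n) ℝ)
    (hBnn : ∀ i j, 0 ≤ B i j)
    (hrow : ∀ i, ∃ j, B i j ≠ 0) (hcol : ∀ j, ∃ i, B i j ≠ 0)
    (R : Matrix (Fin m) (Fin m) ℝ) (C : Matrix (Fin n) (Fin n) ℝ)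
    (hRdef : R = Matrix.diagonal fun i => ∑ j, B i j)
    (hCdef : C = Matrix.diagonal fun j => ∑ i, B i j)
    (M : Matrix (Fin m) (Fin n) ℝ)
    (hM : M = (Matrix.diagonal fun i => (Real.sqrt (R i i))⁻¹) * B *
        (Matrix.diagonal fun j => (Real.sqrt (C j j))⁻¹))
    (hMM : (Mᵀ * M).IsHermitian)
    -- `s` lists the eigenvalues of `MᵀM` in nonincreasing order, so that
    -- `Real.sqrt (s ⟨1,_⟩)` is the second largest singular value of `M`.
    (s : Fin n → ℝ) (hsmono : Antitone s)
    (hs : ∃ e : Fin n ≃ Fin n, ∀ i, s i = hMM.eigenvalues (e i))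
    (S : Finset (Fin m)) (T : Finset (Fin n)) :
    |(fun i => if i ∈ S then (1 : ℝ) else 0) ⬝ᵥ
        (B *ᵥ fun j => if j ∈ T then (1 : ℝ) else 0)
      - ((fun i => if i ∈ S then (1 : ℝ) else 0) ⬝ᵥ (B *ᵥ fun _ => (1 : ℝ))) *
          ((fun _ => (1 : ℝ)) ⬝ᵥ (B *ᵥ fun j => if j ∈ T then (1 : ℝ) else 0)) /
          ((fun _ => (1 : ℝ)) ⬝ᵥ (B *ᵥ fun _ => (1 : ℝ)))|
      ≤ Real.sqrt (s ⟨1, by omega⟩) *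
        Real.sqrt
          ((((fun i => if i ∈ S then (1 : ℝ) else 0) ⬝ᵥ (B *ᵥ fun _ => (1 : ℝ))) -
              ((fun i => if i ∈ S then (1 : ℝ) else 0) ⬝ᵥ (B *ᵥ fun _ => (1 : ℝ))) ^ 2 /
                ((fun _ => (1 : ℝ)) ⬝ᵥ (B *ᵥ fun _ => (1 : ℝ)))) *
            (((fun _ => (1 : ℝ)) ⬝ᵥ (B *ᵥ fun j => if j ∈ T then (1 : ℝ) else 0)) -
              ((fun _ => (1 : ℝ)) ⬝ᵥ (B *ᵥ fun j => if j ∈ T then (1 : ℝ) else 0)) ^ 2 /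
                ((fun _ => (1 : ℝ)) ⬝ᵥ (B *ᵥ fun _ => (1 : ℝ))))) := by
  obtain ⟨e, he⟩ := hs
  have hr : ∀ i, 0 < ∑ j, B i j := fun i =>
    let ⟨j, hj⟩ := hrow i
    sum_pos' (fun j _ => hBnn i j) ⟨j, mem_univ j, (hBnn i j).lt_of_ne' hj⟩
  have hc : ∀ j, 0 < ∑ i, B i j := fun j =>
    let ⟨i, hi⟩ := hcol j
    sum_pos' (fun i _ => hBnn i j) ⟨i, mem_univ i, (hBnn i j).lt_of_ne' hi⟩
  have hMB : M = degreeNormalized B := by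
    subst hM hRdef hCdef
    ext i j
    simp [degreeNormalized, diagonal_mul, mul_diagonal]
  subst hMB
  have indicator_mul_self : ∀ {α : Type} [DecidableEq α] (U : Finset α),
      ((fun i => if i ∈ U then (1 : ℝ) else 0) * fun i => if i ∈ U then 1 else 0) =
        fun i => if i ∈ U then 1 else 0 := fun U => by
    ext i
    by_cases h : i ∈ U <;> simp [h]
  have key := abs_dotProduct_mulVec_sub_le (by omega) hBnn hr hc hMM hsmono e he
    (fun i => if i ∈ S then 1 else 0) (fun j => if j ∈ T then 1 else 0)
  rwa [indicator_mul_self, indicator_mul_self] at key
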